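/- (Birkhoff-type characterization of ergodicity) Let (V,v) be the pair of upper and lower probabilities on a measurable space (Ω,𝓕) generated by a nonempty set 𝒫 of finitely additive probabilities, assume V and v are continuous, and let θ : Ω → Ω be a measurable transformation preserving V. Then θ is ergodic with respect to V if and only if for every bounded measurable ξ : Ω → ℝ there exists a constant c ∈ ℝ such that (1/n) ∑_{k=0}^{n−1} ξ(θ^k ω) converges to c as n → ∞ quasi-surely, i.e. V({ω : (1/n) ∑_{k=0}^{n−1} ξ(θ^k ω) does not converge to c}) = 0. -/

import Mathlib

open MeasureTheory Filter Topology Set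

def IsFinAddProb {Ω : Type*} [MeasurableSpace Ω] (P : Set Ω → ℝ) : Prop :=
  P ∅ = 0 ∧ P Set.univ = 1 ∧
    (∀ A : Set Ω, MeasurableSet A → 0 ≤ P A ∧ P A ≤ 1) ∧
    (∀ A B : Set Ω, MeasurableSet A → MeasurableSet B → Disjoint A B →
      P (A ∪ B) = P A + P B)

def IsCapacity {Ω : Type*} [MeasurableSpace Ω] (μ : Set Ω → ℝ) : Prop :=
  μ ∅ = 0 ∧ μ Set.univ = 1 ∧
    ∀ A B : Set Ω, MeasurableSet A → MeasurableSet B → A ⊆ B → μ A ≤ μ B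

def ContBelow {Ω : Type*} [MeasurableSpace Ω] (μ : Set Ω → ℝ) : Prop :=
  ∀ A : ℕ → Set Ω, (∀ n, MeasurableSet (A n)) → Monotone A →
    Filter.Tendsto (fun n => μ (A n)) Filter.atTop (nhds (μ (⋃ n, A n)))

def ContAbove {Ω : Type*} [MeasurableSpace Ω] (μ : Set Ω → ℝ) : Prop :=
  ∀ A : ℕ → Set Ω, (∀ n, MeasurableSet (A n)) → Antitone A →
    Filter.Tendsto (fun n => μ (A n)) Filter.atTop (nhds (μ (⋂ n, A n)))

def ContAtEmpty {Ω : Type*} [MeasurableSpace Ω] (μ : Set Ω → ℝ) : Prop :=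
  ∀ A : ℕ → Set Ω, (∀ n, MeasurableSet (A n)) → Antitone A → (⋂ n, A n) = ∅ →
    Filter.Tendsto (fun n => μ (A n)) Filter.atTop (nhds 0)

def ContAtUniv {Ω : Type*} [MeasurableSpace Ω] (μ : Set Ω → ℝ) : Prop :=
  ∀ A : ℕ → Set Ω, (∀ n, MeasurableSet (A n)) → Monotone A → (⋃ n, A n) = Set.univ →
    Filter.Tendsto (fun n => μ (A n)) Filter.atTop (nhds 1)

def conjCap {Ω : Type*} (μ : Set Ω → ℝ) (A : Set Ω) : ℝ := 1 - μ Aᶜ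

noncomputable def choquet {Ω : Type*} (μ : Set Ω → ℝ) (ξ : Ω → ℝ) : ℝ :=
  (∫ t in Set.Ioi (0:ℝ), μ {ω | ξ ω ≥ t}) +
    (∫ t in Set.Iio (0:ℝ), (μ {ω | ξ ω ≥ t} - 1))

noncomputable def choquetE {Ω : Type*} (μ : Set Ω → ℝ) (ξ : Ω → EReal) : ℝ :=
  (∫ t in Set.Ioi (0:ℝ), μ {ω | (t : EReal) ≤ ξ ω}) +
    (∫ t in Set.Iio (0:ℝ), (μ {ω | (t : EReal) ≤ ξ ω} - 1))

def UpperProbOf {Ω : Type*} [MeasurableSpace Ω] (𝒮 : Set (Set Ω → ℝ)) (V : Set Ω → ℝ) : Prop :=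
  ∀ A : Set Ω, MeasurableSet A → V A = sSup ((fun P => P A) '' 𝒮)

def LowerProbOf {Ω : Type*} [MeasurableSpace Ω] (𝒮 : Set (Set Ω → ℝ)) (v : Set Ω → ℝ) : Prop :=
  ∀ A : Set Ω, MeasurableSet A → v A = sInf ((fun P => P A) '' 𝒮)

def ErgodicCap {Ω : Type*} [MeasurableSpace Ω] (μ : Set Ω → ℝ) (θ : Ω → Ω) : Prop :=
  ∀ B : Set Ω, MeasurableSet B → θ ⁻¹' B = B →
    (μ B = 0 ∨ μ B = 1) ∧ (μ B = 0 ∨ μ Bᶜ = 0)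

def PreservesCap {Ω : Type*} [MeasurableSpace Ω] (μ : Set Ω → ℝ) (θ : Ω → Ω) : Prop :=
  ∀ A : Set Ω, MeasurableSet A → μ (θ ⁻¹' A) = μ A

def IndepSigmaWrt {Ω : Type*} (μ : Set Ω → ℝ) (m₁ m₂ : MeasurableSpace Ω) : Prop :=
  ∀ A B : Set Ω, MeasurableSet[m₁] A → MeasurableSet[m₂] B → μ (A ∩ B) = μ A * μ B

/-!
(⇐) If `B` is invariant, the Birkhoff averages of `1_B` are constantly `1_B`, so their
quasi-sure convergence to a constant `c` forces `V B = 0` (if `c ≠ 1`) or `V Bᶜ = 0`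
(if `c = 1`).

(⇒) A Banach limit of the Cesàro averages `n⁻¹ ∑_{k<n} P (θ^[k] ⁻¹' A)` of some `P ∈ 𝒮` is
a `θ`-invariant finitely additive probability below `V`; since `V` is continuous at `∅` it is
countably additive, i.e. an invariant probability measure `ν`. By Birkhoff's theorem (proved
from Garsia's maximal inequality) the averages converge `ν`-a.e., so the invariant convergence
set `G` has `ν G = 1`, and ergodicity forces `V Gᶜ = 0`. The `limsup` of the averages is an
invariant function, and ergodicity together with continuity from below makes every invariant
measurable function quasi-surely constant.
-/

open Function

section RealSequence

lemma Filter.limsup_eq_of_tendsto_sub {ι : Type*} {l : Filter ι} [l.NeBot] {u v : ι → ℝ}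
    (hu : IsBoundedUnder (· ≤ ·) l fun i => |u i|) (h : Tendsto (v - u) l (𝓝 0)) :
    limsup v l = limsup u l := by
  obtain ⟨hu₁, hu₂⟩ := isBoundedUnder_le_abs.1 hu
  have hv : v = u + (v - u) := by abel
  apply le_antisymm
  · calc limsup v l = limsup (u + (v - u)) l := by rw [← hv]
      _ ≤ limsup u l + limsup (v - u) l :=
        limsup_add_le hu₂ hu₁ h.isBoundedUnder_ge.isCoboundedUnder_flip h.isBoundedUnder_le
      _ = limsup u l := by rw [h.limsup_eq, add_zero]
  · calc limsup u l = limsup u l + liminf (v - u) l := by rw [h.liminf_eq, add_zero]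
      _ ≤ limsup (u + (v - u)) l :=
        le_limsup_add hu₁ hu₂.isCoboundedUnder_flip h.isBoundedUnder_le h.isBoundedUnder_ge
      _ = limsup v l := by rw [← hv]

lemma exists_tendsto_of_forall_rat {u : ℕ → ℝ}
    (hu : IsBoundedUnder (· ≤ ·) atTop fun n => |u n|)
    (h : ∀ a b : ℚ, a < b →
      ¬ ((b : ℝ) < limsup u atTop ∧ -(a : ℝ) < limsup (fun n => -u n) atTop)) :
    ∃ c, Tendsto u atTop (𝓝 c) := by
  obtain ⟨h₁, h₂⟩ := isBoundedUnder_le_abs.1 hu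
  have hneg : limsup (fun n => -u n) atTop = -liminf u atTop :=
    (Antitone.map_liminf_of_continuousAt (fun _ _ => neg_le_neg) u continuous_neg.continuousAt
      h₁.isCoboundedUnder_flip h₂).symm
  have hle : limsup u atTop ≤ liminf u atTop := by
    by_contra! hlt
    obtain ⟨a, ha₁, ha₂⟩ := exists_rat_btwn hlt
    obtain ⟨b, hb₁, hb₂⟩ := exists_rat_btwn ha₂
    exact h a b (by exact_mod_cast hb₁) ⟨hb₂, by rw [hneg]; linarith⟩
  exact ⟨_, tendsto_of_liminf_eq_limsup (le_antisymm (liminf_le_limsup h₁ h₂) hle) rfl h₁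
    h₂⟩

end RealSequence

section BirkhoffAverage

variable {α : Type*} {f : α → α} {g : α → ℝ} {C : ℝ}

lemma isBounded_range_of_abs_le (hC : ∀ x, |g x| ≤ C) : Bornology.IsBounded (range g) :=
  isBounded_iff_forall_norm_le.2 ⟨C, by rintro _ ⟨y, rfl⟩; exact hC y⟩

lemma abs_birkhoffSum_le (hC : ∀ x, |g x| ≤ C) (n : ℕ) (x : α) :
    |birkhoffSum f g n x| ≤ n * C := by
  calc |birkhoffSum f g n x| ≤ ∑ k ∈ Finset.range n, |g (f^[k] x)| :=
        Finset.abs_sum_le_sum_abs _ _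
    _ ≤ n * C := by
      simpa using Finset.sum_le_card_nsmul (Finset.range n) _ _ fun k _ => hC _

lemma birkhoffAverage_le_of_forall_le {x : α} {n : ℕ} (hn : n ≠ 0)
    (h : ∀ k, g (f^[k] x) ≤ C) : birkhoffAverage ℝ f g n x ≤ C := by
  rw [birkhoffAverage, birkhoffSum, smul_eq_mul, inv_mul_le_iff₀ (by positivity)]
  simpa using Finset.sum_le_card_nsmul (Finset.range n) _ _ fun k _ => h k

lemma le_birkhoffAverage_of_forall_le {x : α} {n : ℕ} (hn : n ≠ 0)
    (h : ∀ k, C ≤ g (f^[k] x)) : C ≤ birkhoffAverage ℝ f g n x := by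
  rw [birkhoffAverage, birkhoffSum, smul_eq_mul, le_inv_mul_iff₀ (by positivity)]
  simpa using Finset.card_nsmul_le_sum (Finset.range n) _ _ fun k _ => h k

lemma abs_birkhoffAverage_le (hC : ∀ x, |g x| ≤ C) (n : ℕ) (x : α) :
    |birkhoffAverage ℝ f g n x| ≤ C := by
  rcases eq_or_ne n 0 with rfl | hn
  · simpa using (abs_nonneg _).trans (hC x)
  exact abs_le.2 ⟨le_birkhoffAverage_of_forall_le hn fun k => (abs_le.1 (hC _)).1,
    birkhoffAverage_le_of_forall_le hn fun k => (abs_le.1 (hC _)).2⟩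

lemma isBoundedUnder_abs_birkhoffAverage (hC : ∀ x, |g x| ≤ C) (x : α) :
    IsBoundedUnder (· ≤ ·) atTop fun n => |birkhoffAverage ℝ f g n x| :=
  isBoundedUnder_of ⟨C, fun n => abs_birkhoffAverage_le hC n x⟩

lemma exists_tendsto_birkhoffAverage_apply_iff (hC : ∀ x, |g x| ≤ C) (x : α) :
    (∃ c, Tendsto (birkhoffAverage ℝ f g · (f x)) atTop (𝓝 c)) ↔
      ∃ c, Tendsto (birkhoffAverage ℝ f g · x) atTop (𝓝 c) := by
  have hd := tendsto_birkhoffAverage_apply_sub_birkhoffAverage' ℝ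
    (isBounded_range_of_abs_le hC) f x
  refine exists_congr fun c => ⟨fun h => ?_, fun h => ?_⟩
  · simpa using h.sub hd
  · simpa using h.add hd

noncomputable def birkhoffLimsup (f : α → α) (g : α → ℝ) (x : α) : ℝ :=
  limsup (birkhoffAverage ℝ f g · x) atTop

lemma birkhoffLimsup_apply (hC : ∀ x, |g x| ≤ C) (x : α) :
    birkhoffLimsup f g (f x) = birkhoffLimsup f g x :=
  limsup_eq_of_tendsto_sub (isBoundedUnder_abs_birkhoffAverage hC x)
    (tendsto_birkhoffAverage_apply_sub_birkhoffAverage' ℝ (isBounded_range_of_abs_le hC) f x)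

lemma abs_birkhoffLimsup_le (hC : ∀ x, |g x| ≤ C) (x : α) : |birkhoffLimsup f g x| ≤ C := by
  obtain ⟨h₁, h₂⟩ :=
    isBoundedUnder_le_abs.1 (isBoundedUnder_abs_birkhoffAverage (f := f) hC x)
  refine abs_le.2 ⟨?_, ?_⟩
  · exact le_limsup_of_frequently_le (Frequently.of_forall fun n =>
      (abs_le.1 (abs_birkhoffAverage_le hC n x)).1) h₁
  · exact limsup_le_of_le h₂.isCoboundedUnder_flip (Eventually.of_forall fun n =>
      (abs_le.1 (abs_birkhoffAverage_le hC n x)).2)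

noncomputable def maxBirkhoffSum (f : α → α) (g : α → ℝ) (N : ℕ) (x : α) : ℝ :=
  (Finset.range (N + 1)).sup' Finset.nonempty_range_add_one (birkhoffSum f g · x)

lemma birkhoffSum_le_maxBirkhoffSum {k N : ℕ} (hk : k ≤ N) (x : α) :
    birkhoffSum f g k x ≤ maxBirkhoffSum f g N x :=
  Finset.le_sup' (birkhoffSum f g · x) (Finset.mem_range_succ_iff.2 hk)

lemma maxBirkhoffSum_nonneg (N : ℕ) (x : α) : 0 ≤ maxBirkhoffSum f g N x := by
  simpa using birkhoffSum_le_maxBirkhoffSum (f := f) (g := g) N.zero_le x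

lemma maxBirkhoffSum_mono (x : α) : Monotone (maxBirkhoffSum f g · x) := fun _ _ hMN =>
  Finset.sup'_mono _ (Finset.range_subset_range.2 (by omega)) _

lemma exists_maxBirkhoffSum_eq (N : ℕ) (x : α) :
    ∃ k ≤ N, maxBirkhoffSum f g N x = birkhoffSum f g k x := by
  obtain ⟨k, hk, h⟩ :=
    Finset.exists_mem_eq_sup' Finset.nonempty_range_add_one (birkhoffSum f g · x)
  exact ⟨k, Finset.mem_range_succ_iff.1 hk, h⟩

lemma abs_maxBirkhoffSum_le (hC : ∀ x, |g x| ≤ C) (N : ℕ) (x : α) :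
    |maxBirkhoffSum f g N x| ≤ N * C := by
  obtain ⟨k, hkN, hk⟩ := exists_maxBirkhoffSum_eq (f := f) (g := g) N x
  rw [hk]
  exact (abs_birkhoffSum_le hC k x).trans (by gcongr; exact (abs_nonneg _).trans (hC x))

lemma maxBirkhoffSum_le_add_apply (N : ℕ) {x : α} (hx : 0 < maxBirkhoffSum f g N x) :
    maxBirkhoffSum f g N x ≤ g x + maxBirkhoffSum f g N (f x) := by
  obtain ⟨_ | k, hkN, hk⟩ := exists_maxBirkhoffSum_eq (f := f) (g := g) N x
  · simp [hk] at hx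
  rw [hk, birkhoffSum_succ']
  exact add_le_add_right (birkhoffSum_le_maxBirkhoffSum (by omega) _) _

variable [MeasurableSpace α]

lemma measurable_birkhoffSum (hf : Measurable f) (hg : Measurable g) (n : ℕ) :
    Measurable (birkhoffSum f g n) := by
  have := hf.iterate
  unfold birkhoffSum
  fun_prop

lemma measurable_birkhoffAverage (hf : Measurable f) (hg : Measurable g) (n : ℕ) :
    Measurable (birkhoffAverage ℝ f g n) :=
  (measurable_birkhoffSum hf hg n).const_smul ((n : ℝ)⁻¹)

lemma measurable_birkhoffLimsup (hf : Measurable f) (hg : Measurable g) :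
    Measurable (birkhoffLimsup f g) :=
  .limsup fun n => measurable_birkhoffAverage hf hg n

lemma measurable_maxBirkhoffSum (hf : Measurable f) (hg : Measurable g) (N : ℕ) :
    Measurable (maxBirkhoffSum f g N) :=
  Finset.measurable_range_sup'' fun k _ => measurable_birkhoffSum hf hg k

end BirkhoffAverage

section BirkhoffErgodicTheorem

variable {α : Type*} [MeasurableSpace α] {μ : Measure α} [IsFiniteMeasure μ] {f : α → α}
  {g : α → ℝ} {C : ℝ}

lemma integrable_of_abs_le (hg : Measurable g) (hC : ∀ x, |g x| ≤ C) : Integrable g μ :=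
  .of_bound hg.aestronglyMeasurable C (.of_forall hC)

theorem setIntegral_maxBirkhoffSum_pos_nonneg (hf : MeasurePreserving f μ μ)
    (hg : Measurable g) (hC : ∀ x, |g x| ≤ C) (N : ℕ) :
    0 ≤ ∫ x in {x | 0 < maxBirkhoffSum f g N x}, g x ∂μ := by
  set M := maxBirkhoffSum f g N
  set E := {x | 0 < M x}
  have hM : Measurable M := measurable_maxBirkhoffSum hf.measurable hg N
  have hMi : Integrable M μ := integrable_of_abs_le hM (abs_maxBirkhoffSum_le hC N)
  have hMfi : Integrable (M ∘ f) μ := hf.integrable_comp_of_integrable hMi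
  have hE : MeasurableSet E := measurableSet_lt measurable_const hM
  have hMf : ∫ x, M (f x) ∂μ = ∫ x, M x ∂μ := by
    rw [← integral_map hf.aemeasurable hM.aestronglyMeasurable, hf.map_eq]
  have hME : ∫ x in E, M x ∂μ = ∫ x, M x ∂μ :=
    setIntegral_eq_integral_of_forall_compl_eq_zero fun x hx =>
      le_antisymm (not_lt.1 hx) (maxBirkhoffSum_nonneg N x)
  calc 0 = ∫ x in E, M x ∂μ - ∫ x, M (f x) ∂μ := by rw [hMf, hME, sub_self]
    _ ≤ ∫ x in E, M x ∂μ - ∫ x in E, M (f x) ∂μ := sub_le_sub_left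
      (setIntegral_le_integral hMfi (.of_forall fun x => maxBirkhoffSum_nonneg N (f x))) _
    _ = ∫ x in E, (M x - M (f x)) ∂μ := (integral_sub hMi.integrableOn hMfi.integrableOn).symm
    _ ≤ ∫ x in E, g x ∂μ :=
      setIntegral_mono_on (hMi.sub hMfi).integrableOn (integrable_of_abs_le hg hC).integrableOn
        hE fun x hx => by linarith [maxBirkhoffSum_le_add_apply N hx]

theorem mul_measureReal_univ_le_integral_of_lt_birkhoffLimsup (hf : MeasurePreserving f μ μ)
    (hg : Measurable g) (hC : ∀ x, |g x| ≤ C) {b : ℝ}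
    (hb : ∀ᵐ x ∂μ, b < birkhoffLimsup f g x) : b * μ.real univ ≤ ∫ x, g x ∂μ := by
  set h : α → ℝ := fun x => g x - b
  have hh : Measurable h := hg.sub_const b
  have hhC : ∀ x, |h x| ≤ C + |b| := fun x => (abs_sub _ _).trans (by linarith [hC x])
  set s : ℕ → Set α := fun N => {x | 0 < maxBirkhoffSum f h N x}
  have hs : ∀ N, MeasurableSet (s N) := fun N =>
    measurableSet_lt measurable_const (measurable_maxBirkhoffSum hf.measurable hh N)
  have hsm : Monotone s := fun M N hMN x hx => hx.trans_le (maxBirkhoffSum_mono x hMN)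
  have hcover : ⋃ N, s N =ᵐ[μ] univ := by
    refine ae_eq_univ.2 (measure_eq_zero_iff_ae_notMem.2 ?_)
    filter_upwards [hb] with x hx
    obtain ⟨-, hbdd⟩ :=
      isBoundedUnder_le_abs.1 (isBoundedUnder_abs_birkhoffAverage (f := f) hC x)
    obtain ⟨n, hn, hbn⟩ :=
      (frequently_lt_of_lt_limsup hbdd.isCoboundedUnder_flip hx).forall_exists_of_atTop 1
    rw [birkhoffAverage, smul_eq_mul, lt_inv_mul_iff₀ (by exact_mod_cast hn)] at hbn
    have hsum : birkhoffSum f h n x = birkhoffSum f g n x - n * b := by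
      simp [h, birkhoffSum, Finset.sum_sub_distrib]
    have hpos : 0 < birkhoffSum f h n x := by linarith
    simpa using ⟨n, hpos.trans_le (birkhoffSum_le_maxBirkhoffSum le_rfl x)⟩
  have hlim := tendsto_setIntegral_of_monotone hs hsm
    (integrable_of_abs_le (μ := μ) hh hhC).integrableOn
  rw [setIntegral_congr_set hcover, setIntegral_univ] at hlim
  have h₀ := ge_of_tendsto' hlim fun N => setIntegral_maxBirkhoffSum_pos_nonneg hf hh hhC N
  rw [integral_sub (integrable_of_abs_le hg hC) (integrable_const b), integral_const,
    smul_eq_mul] at h₀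
  linarith

theorem ae_exists_tendsto_birkhoffAverage (hf : MeasurePreserving f μ μ) (hg : Measurable g)
    (hC : ∀ x, |g x| ≤ C) :
    ∀ᵐ x ∂μ, ∃ c, Tendsto (birkhoffAverage ℝ f g · x) atTop (𝓝 c) := by
  have hC' : ∀ x, |(-g) x| ≤ C := by simpa using hC
  -- `E` below is the invariant set where `liminf < a < b < limsup`; the previous theorem
  -- applied to `g` and `-g` on `E` gives `b μ(E) ≤ ∫_E g ≤ a μ(E)`.
  have hnull : ∀ a b : ℚ, a < b →
      μ {x | (b : ℝ) < birkhoffLimsup f g x ∧ -(a : ℝ) < birkhoffLimsup f (-g) x} = 0 := by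
    intro a b hab
    set E := {x | (b : ℝ) < birkhoffLimsup f g x ∧ -(a : ℝ) < birkhoffLimsup f (-g) x}
    have hE : MeasurableSet E :=
      (measurableSet_lt measurable_const (measurable_birkhoffLimsup hf.measurable hg)).inter
        (measurableSet_lt measurable_const (measurable_birkhoffLimsup hf.measurable hg.neg))
    have hfE : MeasurePreserving f (μ.restrict E) (μ.restrict E) := by
      have hEf : f ⁻¹' E = E := by
        ext x
        simp [E, birkhoffLimsup_apply hC, birkhoffLimsup_apply hC']
      simpa only [hEf] using hf.restrict_preimage hE
    have h₁ := mul_measureReal_univ_le_integral_of_lt_birkhoffLimsup hfE hg hC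
      (ae_restrict_of_forall_mem hE fun x hx => hx.1)
    have h₂ := mul_measureReal_univ_le_integral_of_lt_birkhoffLimsup hfE hg.neg hC'
      (ae_restrict_of_forall_mem hE fun x hx => hx.2)
    simp only [Pi.neg_apply, integral_neg, measureReal_restrict_apply_univ] at h₁ h₂
    have hab' : (a : ℝ) < b := by exact_mod_cast hab
    have : μ.real E = 0 := by nlinarith [measureReal_nonneg (μ := μ) (s := E)]
    exact (measureReal_eq_zero_iff).1 this
  have hae : ∀ᵐ x ∂μ, ∀ a b : ℚ, a < b →
      ¬ ((b : ℝ) < birkhoffLimsup f g x ∧ -(a : ℝ) < birkhoffLimsup f (-g) x) := by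
    simp only [ae_all_iff, eventually_imp_distrib_left]
    exact fun a b hab => measure_eq_zero_iff_ae_notMem.1 (hnull a b hab)
  filter_upwards [hae] with x hx
  refine exists_tendsto_of_forall_rat (isBoundedUnder_abs_birkhoffAverage hC x) fun a b hab => ?_
  simpa [birkhoffLimsup, birkhoffAverage_neg] using hx a b hab

end BirkhoffErgodicTheorem

section Capacity

variable {Ω : Type*} [MeasurableSpace Ω] {μ : Set Ω → ℝ} {θ : Ω → Ω} {A B : Set Ω}

def IsSubadditiveCap (μ : Set Ω → ℝ) : Prop :=
  ∀ A B : Set Ω, MeasurableSet A → MeasurableSet B → μ (A ∪ B) ≤ μ A + μ B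

namespace IsCapacity

lemma nonneg (hμ : IsCapacity μ) (hA : MeasurableSet A) : 0 ≤ μ A :=
  hμ.1 ▸ hμ.2.2 ∅ A .empty hA (empty_subset A)

lemma le_one (hμ : IsCapacity μ) (hA : MeasurableSet A) : μ A ≤ 1 :=
  hμ.2.1 ▸ hμ.2.2 A univ hA .univ (subset_univ A)

lemma eq_zero_of_subset (hμ : IsCapacity μ) (hA : MeasurableSet A) (hB : MeasurableSet B)
    (hAB : A ⊆ B) (hB₀ : μ B = 0) : μ A = 0 :=
  le_antisymm (hB₀ ▸ hμ.2.2 A B hA hB hAB) (hμ.nonneg hA)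

lemma union_eq_zero (hμ : IsCapacity μ) (hsub : IsSubadditiveCap μ) (hA : MeasurableSet A)
    (hB : MeasurableSet B) (hA₀ : μ A = 0) (hB₀ : μ B = 0) : μ (A ∪ B) = 0 :=
  le_antisymm (by simpa [hA₀, hB₀] using hsub A B hA hB) (hμ.nonneg (hA.union hB))

lemma eq_one_of_compl_eq_zero (hμ : IsCapacity μ) (hsub : IsSubadditiveCap μ)
    (hA : MeasurableSet A) (hA₀ : μ Aᶜ = 0) : μ A = 1 :=
  le_antisymm (hμ.le_one hA) (by simpa [hA₀, hμ.2.1] using hsub A Aᶜ hA hA.compl)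

end IsCapacity

lemma ContBelow.iUnion_eq_zero (hc : ContBelow μ) {A : ℕ → Set Ω}
    (hA : ∀ n, MeasurableSet (A n)) (hmono : Monotone A) (h₀ : ∀ n, μ (A n) = 0) :
    μ (⋃ n, A n) = 0 :=
  tendsto_nhds_unique (hc A hA hmono) (by simp [h₀])

lemma ContBelow.setOf_lt_eq_zero (hc : ContBelow μ) {g : Ω → ℝ} (hg : Measurable g) {c : ℝ}
    (h : ∀ t < c, μ {x | g x < t} = 0) : μ {x | g x < c} = 0 := by
  have hε (n : ℕ) : 0 < 1 / ((n : ℝ) + 1) := Nat.one_div_pos_of_nat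
  have : {x | g x < c} = ⋃ n : ℕ, {x | g x < c - 1 / (n + 1)} := by
    ext x
    simp only [mem_ofPred_eq, mem_iUnion]
    refine ⟨fun hx => ?_, fun ⟨n, hn⟩ => by linarith [hε n]⟩
    obtain ⟨n, hn⟩ := exists_nat_one_div_lt (sub_pos.2 hx)
    exact ⟨n, by linarith⟩
  rw [this]
  refine hc.iUnion_eq_zero (fun n => measurableSet_lt hg measurable_const)
    (fun n m hnm x (hx : g x < _) => show g x < _ by
      linarith [Nat.one_div_le_one_div (α := ℝ) hnm]) fun n => h _ (sub_lt_self c (hε n))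

lemma ContBelow.setOf_gt_eq_zero (hc : ContBelow μ) {g : Ω → ℝ} (hg : Measurable g) {c : ℝ}
    (h : ∀ t > c, μ {x | t ≤ g x} = 0) : μ {x | c < g x} = 0 := by
  have hε (n : ℕ) : 0 < 1 / ((n : ℝ) + 1) := Nat.one_div_pos_of_nat
  have : {x | c < g x} = ⋃ n : ℕ, {x | c + 1 / (n + 1) ≤ g x} := by
    ext x
    simp only [mem_ofPred_eq, mem_iUnion]
    refine ⟨fun hx => ?_, fun ⟨n, hn⟩ => by linarith [hε n]⟩
    obtain ⟨n, hn⟩ := exists_nat_one_div_lt (sub_pos.2 hx)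
    exact ⟨n, by linarith⟩
  rw [this]
  refine hc.iUnion_eq_zero (fun n => measurableSet_le measurable_const hg)
    (fun n m hnm x (hx : _ ≤ g x) => show _ ≤ g x by
      linarith [Nat.one_div_le_one_div (α := ℝ) hnm]) fun n => h _ (lt_add_of_pos_right c (hε n))

theorem ErgodicCap.exists_eq_const (herg : ErgodicCap μ θ) (hμ : IsCapacity μ)
    (hsub : IsSubadditiveCap μ) (hc : ContBelow μ) {g : Ω → ℝ} {C : ℝ} (hg : Measurable g)
    (hinv : ∀ x, g (θ x) = g x) (hC : ∀ x, |g x| ≤ C) : ∃ c, μ {x | g x ≠ c} = 0 := by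
  have hlt_meas (t : ℝ) : MeasurableSet {x | g x < t} := measurableSet_lt hg measurable_const
  have hdich (t : ℝ) : μ {x | g x < t} = 0 ∨ μ {x | t ≤ g x} = 0 := by
    simpa [compl_ofPred] using (herg _ (hlt_meas t) (by ext x; simp [hinv])).2
  set S := {t | μ {x | g x < t} = 0}
  have hS : -C ∈ S := by
    have : {x | g x < -C} = ∅ := by
      ext x
      simpa using (abs_le.1 (hC x)).1
    simp [S, this, hμ.1]
  have hSbdd : BddAbove S := ⟨C, fun t ht => by
    by_contra! hCt
    have : {x | g x < t} = univ := by
      ext x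
      simpa using (abs_le.1 (hC x)).2.trans_lt hCt
    simp [S, this, hμ.2.1] at ht⟩
  have hlt : μ {x | g x < sSup S} = 0 := hc.setOf_lt_eq_zero hg fun t ht => by
    obtain ⟨s, hs, hts⟩ := exists_lt_of_lt_csSup ⟨_, hS⟩ ht
    exact hμ.eq_zero_of_subset (hlt_meas t) (hlt_meas s) (fun x hx => lt_trans hx hts) hs
  have hgt : μ {x | sSup S < g x} = 0 := hc.setOf_gt_eq_zero hg fun t ht =>
    (hdich t).resolve_left fun h => (le_csSup hSbdd h).not_gt ht
  refine ⟨sSup S, ?_⟩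
  have : {x | g x ≠ sSup S} = {x | g x < sSup S} ∪ {x | sSup S < g x} := by
    ext x
    exact ne_iff_lt_or_gt
  rw [this]
  exact hμ.union_eq_zero hsub (hlt_meas _) (measurableSet_lt measurable_const hg) hlt hgt

end Capacity

section UpperProb

variable {Ω : Type*} [MeasurableSpace Ω] {P Q V : Set Ω → ℝ} {𝒮 : Set (Set Ω → ℝ)}
  {θ : Ω → Ω} {A B : Set Ω}

namespace IsFinAddProb

lemma nonneg (hP : IsFinAddProb P) (hA : MeasurableSet A) : 0 ≤ P A := (hP.2.2.1 A hA).1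

lemma le_one (hP : IsFinAddProb P) (hA : MeasurableSet A) : P A ≤ 1 := (hP.2.2.1 A hA).2

lemma mono (hP : IsFinAddProb P) (hA : MeasurableSet A) (hB : MeasurableSet B) (hAB : A ⊆ B) :
    P A ≤ P B := by
  have := hP.2.2.2 A (B \ A) hA (hB.diff hA) disjoint_sdiff_self_right
  rw [union_sdiff_cancel hAB] at this
  linarith [hP.nonneg (hB.diff hA)]

lemma union_le (hP : IsFinAddProb P) (hA : MeasurableSet A) (hB : MeasurableSet B) :
    P (A ∪ B) ≤ P A + P B := by
  have := hP.2.2.2 A (B \ A) hA (hB.diff hA) disjoint_sdiff_self_right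
  rw [union_sdiff_self] at this
  linarith [hP.mono (hB.diff hA) hB sdiff_subset]

end IsFinAddProb

namespace UpperProbOf

lemma le_of_mem (hV : UpperProbOf 𝒮 V) (hP : ∀ P ∈ 𝒮, IsFinAddProb P)
    (hP𝒮 : P ∈ 𝒮) (hA : MeasurableSet A) : P A ≤ V A := by
  rw [hV A hA]
  refine le_csSup ⟨1, ?_⟩ ⟨P, hP𝒮, rfl⟩
  rintro _ ⟨Q, hQ, rfl⟩
  exact (hP Q hQ).le_one hA

lemma le_of_forall_le (hV : UpperProbOf 𝒮 V) (h𝒮 : 𝒮.Nonempty) (hA : MeasurableSet A)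
    {r : ℝ} (h : ∀ P ∈ 𝒮, P A ≤ r) : V A ≤ r := by
  rw [hV A hA]
  exact csSup_le (h𝒮.image _) (by rintro _ ⟨P, hP𝒮, rfl⟩; exact h P hP𝒮)

lemma eq_of_forall_eq (hV : UpperProbOf 𝒮 V) (h𝒮 : 𝒮.Nonempty)
    (hP : ∀ P ∈ 𝒮, IsFinAddProb P) (hA : MeasurableSet A) {r : ℝ} (h : ∀ P ∈ 𝒮, P A = r) :
    V A = r := by
  obtain ⟨P, hP𝒮⟩ := h𝒮
  exact le_antisymm (hV.le_of_forall_le ⟨P, hP𝒮⟩ hA fun Q hQ => (h Q hQ).le)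
    (h P hP𝒮 ▸ hV.le_of_mem hP hP𝒮 hA)

lemma isCapacity (hV : UpperProbOf 𝒮 V) (h𝒮 : 𝒮.Nonempty)
    (hP : ∀ P ∈ 𝒮, IsFinAddProb P) : IsCapacity V :=
  ⟨hV.eq_of_forall_eq h𝒮 hP .empty fun P hP𝒮 => (hP P hP𝒮).1,
    hV.eq_of_forall_eq h𝒮 hP .univ fun P hP𝒮 => (hP P hP𝒮).2.1,
    fun _ _ hA hB hAB => hV.le_of_forall_le h𝒮 hA fun P hP𝒮 =>
      ((hP P hP𝒮).mono hA hB hAB).trans (hV.le_of_mem hP hP𝒮 hB)⟩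

lemma isSubadditiveCap (hV : UpperProbOf 𝒮 V) (h𝒮 : 𝒮.Nonempty)
    (hP : ∀ P ∈ 𝒮, IsFinAddProb P) : IsSubadditiveCap V := fun _ _ hA hB =>
  hV.le_of_forall_le h𝒮 (hA.union hB) fun P hP𝒮 => ((hP P hP𝒮).union_le hA hB).trans
    (add_le_add (hV.le_of_mem hP hP𝒮 hA) (hV.le_of_mem hP hP𝒮 hB))

end UpperProbOf

lemma PreservesCap.iterate (hpres : PreservesCap V θ) (hθ : Measurable θ) (hA : MeasurableSet A)
    (k : ℕ) : V (θ^[k] ⁻¹' A) = V A := by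
  induction k with
  | zero => rfl
  | succ k ih => rw [iterate_succ, preimage_comp, hpres _ ((hθ.iterate k) hA), ih]

end UpperProb

section FinAddProbLimit

variable {Ω : Type*} [MeasurableSpace Ω] {P Q V : Set Ω → ℝ} {θ : Ω → Ω}

lemma isFinAddProb_of_tendsto {ι : Type*} {l : Filter ι} [l.NeBot] {F : ι → Set Ω → ℝ}
    (hF : ∀ᶠ i in l, IsFinAddProb (F i))
    (hQ : ∀ A, MeasurableSet A → Tendsto (F · A) l (𝓝 (Q A))) : IsFinAddProb Q := by
  refine ⟨?_, ?_, fun A hA => ⟨?_, ?_⟩, fun A B hA hB hAB => ?_⟩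
  · exact tendsto_nhds_unique (hQ ∅ .empty)
      (tendsto_const_nhds.congr' (hF.mono fun i hi => hi.1.symm))
  · exact tendsto_nhds_unique (hQ univ .univ)
      (tendsto_const_nhds.congr' (hF.mono fun i hi => hi.2.1.symm))
  · exact ge_of_tendsto (hQ A hA) (hF.mono fun i hi => hi.nonneg hA)
  · exact le_of_tendsto (hQ A hA) (hF.mono fun i hi => hi.le_one hA)
  · exact tendsto_nhds_unique (hQ _ (hA.union hB)) (((hQ A hA).add (hQ B hB)).congr'
      (hF.mono fun i hi => (hi.2.2.2 A B hA hB hAB).symm))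

lemma IsFinAddProb.birkhoffAverage_preimage (hP : IsFinAddProb P) (hθ : Measurable θ) {n : ℕ}
    (hn : n ≠ 0) : IsFinAddProb (birkhoffAverage ℝ (preimage θ) P n) := by
  have hiter (k : ℕ) (A : Set Ω) : (preimage θ)^[k] A = θ^[k] ⁻¹' A := by
    rw [preimage_iterate_eq]
  refine ⟨?_, ?_, fun A hA => ⟨?_, ?_⟩, fun A B hA hB hAB => ?_⟩
  · simp [birkhoffAverage, birkhoffSum, hiter, hP.1]
  · simp [birkhoffAverage, birkhoffSum, hiter, hP.2.1, hn]
  · exact le_birkhoffAverage_of_forall_le hn fun k => hiter k A ▸ hP.nonneg ((hθ.iterate k) hA)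
  · exact birkhoffAverage_le_of_forall_le hn fun k => hiter k A ▸ hP.le_one ((hθ.iterate k) hA)
  · simp only [birkhoffAverage, birkhoffSum, hiter, preimage_union, ← smul_add,
      ← Finset.sum_add_distrib]
    congr 2 with k
    exact hP.2.2.2 _ _ ((hθ.iterate k) hA) ((hθ.iterate k) hB) (hAB.preimage _)

lemma tendsto_limUnder_of_forall_mem {ι X : Type*} [TopologicalSpace X] [Nonempty X]
    {U : Ultrafilter ι} {u : ι → X} {K : Set X} (hK : IsCompact K) (hu : ∀ i, u i ∈ K) :
    Tendsto u U (𝓝 (limUnder (U : Filter ι) u)) := by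
  obtain ⟨c, -, hc⟩ := hK.ultrafilter_le_nhds (U.map u)
    (le_principal_iff.2 (univ_mem' hu : u ⁻¹' K ∈ (U : Filter ι)))
  exact tendsto_nhds_limUnder ⟨c, hc⟩

theorem exists_invariant_isFinAddProb_le (hP : IsFinAddProb P)
    (hPV : ∀ A, MeasurableSet A → P A ≤ V A) (hθ : Measurable θ)
    (hpres : PreservesCap V θ) :
    ∃ Q : Set Ω → ℝ, IsFinAddProb Q ∧ (∀ A, MeasurableSet A → Q A ≤ V A) ∧
      ∀ A, MeasurableSet A → Q (θ ⁻¹' A) = Q A := by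
  -- `birkhoffAverage ℝ (preimage θ) P n A` is the Cesàro average
  -- `n⁻¹ ∑_{k<n} P (θ^[k] ⁻¹' A)`; `Q` is its limit along an ultrafilter finer than `atTop`.
  set U := Ultrafilter.of (atTop : Filter ℕ)
  have hU : ∀ᶠ n in (U : Filter ℕ), n ≠ 0 := Ultrafilter.of_le _ (eventually_ne_atTop 0)
  set F := birkhoffAverage ℝ (preimage θ) P
  have hiter (k : ℕ) (A : Set Ω) : (preimage θ)^[k] A = θ^[k] ⁻¹' A := by
    rw [preimage_iterate_eq]
  have horbit : ∀ A, MeasurableSet A → ∀ k, P ((preimage θ)^[k] A) ∈ Icc (0 : ℝ) 1 :=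
    fun A hA k => hiter k A ▸ ⟨hP.nonneg ((hθ.iterate k) hA), hP.le_one ((hθ.iterate k) hA)⟩
  have hFA : ∀ A, MeasurableSet A → ∀ n, F n A ∈ Icc (0 : ℝ) 1 := by
    intro A hA n
    rcases eq_or_ne n 0 with rfl | hn
    · simp [F]
    have hFn := hP.birkhoffAverage_preimage hθ hn
    exact ⟨hFn.nonneg hA, hFn.le_one hA⟩
  set Q := fun A => limUnder (U : Filter ℕ) (F · A)
  have hQ : ∀ A, MeasurableSet A → Tendsto (F · A) U (𝓝 (Q A)) := fun A hA =>
    tendsto_limUnder_of_forall_mem isCompact_Icc (hFA A hA)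
  refine ⟨Q, isFinAddProb_of_tendsto (hU.mono fun n hn => hP.birkhoffAverage_preimage hθ hn) hQ,
    fun A hA => ?_, fun A hA => ?_⟩
  · refine le_of_tendsto (hQ A hA)
      (hU.mono fun n hn => birkhoffAverage_le_of_forall_le hn fun k => ?_)
    rw [hiter, ← hpres.iterate hθ hA k]
    exact hPV _ ((hθ.iterate k) hA)
  · have hshift := tendsto_birkhoffAverage_apply_sub_birkhoffAverage ℝ
      ((Metric.isBounded_Icc (0 : ℝ) 1).subset (range_subset_iff.2 (horbit A hA)))
    exact tendsto_nhds_unique (hQ _ (hθ hA))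
      (by simpa [F] using (hQ A hA).add (hshift.mono_left (Ultrafilter.of_le _)))

end FinAddProbLimit

section ToMeasure

variable {Ω : Type*} [MeasurableSpace Ω] {Q V : Set Ω → ℝ} {𝒮 : Set (Set Ω → ℝ)}
  {θ : Ω → Ω} {A : Set Ω}

lemma isSetRing_measurableSet : IsSetRing {s : Set Ω | MeasurableSet s} :=
  ⟨.empty, fun _ _ => .union, fun _ _ => .diff⟩

lemma IsFinAddProb.contAtEmpty_of_le (hQ : IsFinAddProb Q)
    (hQV : ∀ A, MeasurableSet A → Q A ≤ V A) (hV : ContAtEmpty V) : ContAtEmpty Q :=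
  fun A hA hanti hempty => tendsto_of_tendsto_of_tendsto_of_le_of_le tendsto_const_nhds
    (hV A hA hanti hempty) (fun n => hQ.nonneg (hA n)) fun n => hQV _ (hA n)

noncomputable def IsFinAddProb.toMeasure (hQ : IsFinAddProb Q) (hc : ContAtEmpty Q) :
    Measure Ω :=
  Measure.ofMeasurable (fun s _ => ENNReal.ofReal (Q s)) (by simp [hQ.1]) fun _ hA hdisj =>
    addContent_iUnion_eq_sum_of_tendsto_zero isSetRing_measurableSet
      (isSetRing_measurableSet.addContent_of_union (fun s => ENNReal.ofReal (Q s))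
        (by simp [hQ.1]) fun hs ht hst => by
          rw [hQ.2.2.2 _ _ hs ht hst, ENNReal.ofReal_add (hQ.nonneg hs) (hQ.nonneg ht)])
      (fun _ _ => ENNReal.ofReal_ne_top)
      (fun s hs hanti hempty =>
        ENNReal.ofReal_zero ▸ ENNReal.tendsto_ofReal (hc s hs hanti hempty))
      hA (MeasurableSet.iUnion hA) hdisj

namespace IsFinAddProb

variable (hQ : IsFinAddProb Q) (hc : ContAtEmpty Q)

lemma toMeasure_apply (hA : MeasurableSet A) : hQ.toMeasure hc A = ENNReal.ofReal (Q A) :=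
  Measure.ofMeasurable_apply A hA

lemma measureReal_toMeasure (hA : MeasurableSet A) : (hQ.toMeasure hc).real A = Q A := by
  simp [Measure.real, hQ.toMeasure_apply hc hA, hQ.nonneg hA]

lemma isProbabilityMeasure_toMeasure : IsProbabilityMeasure (hQ.toMeasure hc) :=
  ⟨by simp [hQ.toMeasure_apply hc .univ, hQ.2.1]⟩

lemma measurePreserving_toMeasure (hθ : Measurable θ)
    (hQθ : ∀ A, MeasurableSet A → Q (θ ⁻¹' A) = Q A) :
    MeasurePreserving θ (hQ.toMeasure hc) (hQ.toMeasure hc) :=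
  ⟨hθ, Measure.ext fun A hA => by
    rw [Measure.map_apply hθ hA, hQ.toMeasure_apply hc (hθ hA), hQ.toMeasure_apply hc hA,
      hQθ A hA]⟩

end IsFinAddProb

theorem UpperProbOf.exists_invariant_measure_le (hV : UpperProbOf 𝒮 V) (h𝒮 : 𝒮.Nonempty)
    (hP : ∀ P ∈ 𝒮, IsFinAddProb P) (hVa : ContAbove V) (hθ : Measurable θ)
    (hpres : PreservesCap V θ) :
    ∃ ν : Measure Ω, IsProbabilityMeasure ν ∧ MeasurePreserving θ ν ν ∧
      ∀ A, MeasurableSet A → ν.real A ≤ V A := by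
  obtain ⟨P, hP𝒮⟩ := h𝒮
  obtain ⟨Q, hQ, hQV, hQθ⟩ :=
    exists_invariant_isFinAddProb_le (hP P hP𝒮) (fun A hA => hV.le_of_mem hP hP𝒮 hA) hθ hpres
  have hV₀ : ContAtEmpty V := fun A hA hanti hempty => by
    simpa [hempty, (hV.isCapacity ⟨P, hP𝒮⟩ hP).1] using hVa A hA hanti
  have hc := hQ.contAtEmpty_of_le hQV hV₀
  exact ⟨hQ.toMeasure hc, hQ.isProbabilityMeasure_toMeasure hc,
    hQ.measurePreserving_toMeasure hc hθ hQθ,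
    fun A hA => (hQ.measureReal_toMeasure hc hA).trans_le (hQV A hA)⟩

end ToMeasure

section ErgodicCapacity

variable {Ω : Type*} [MeasurableSpace Ω] {μ : Set Ω → ℝ} {θ : Ω → Ω} {B : Set Ω}

lemma ErgodicCap.compl_eq_zero_of_measure (herg : ErgodicCap μ θ) {ν : Measure Ω}
    [IsProbabilityMeasure ν] (hνμ : ∀ A, MeasurableSet A → ν.real A ≤ μ A)
    (hB : MeasurableSet B) (hinv : θ ⁻¹' B = B) (hνB : ν Bᶜ = 0) : μ Bᶜ = 0 :=
  (herg B hB hinv).2.resolve_left fun hμB => by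
    have : ν B = 0 :=
      (measureReal_eq_zero_iff).1 (le_antisymm (hμB ▸ hνμ B hB) measureReal_nonneg)
    simpa [this, hνB] using measure_add_measure_compl (μ := ν) hB

theorem ErgodicCap.exists_tendsto_birkhoffAverage (herg : ErgodicCap μ θ) (hμ : IsCapacity μ)
    (hsub : IsSubadditiveCap μ) (hc : ContBelow μ) {ν : Measure Ω} [IsProbabilityMeasure ν]
    (hν : MeasurePreserving θ ν ν) (hνμ : ∀ A, MeasurableSet A → ν.real A ≤ μ A)
    {ξ : Ω → ℝ} {C : ℝ} (hξ : Measurable ξ) (hC : ∀ x, |ξ x| ≤ C) :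
    ∃ c, μ {x | ¬ Tendsto (birkhoffAverage ℝ θ ξ · x) atTop (𝓝 c)} = 0 := by
  set G := {x | ∃ c, Tendsto (birkhoffAverage ℝ θ ξ · x) atTop (𝓝 c)}
  have hG : MeasurableSet G :=
    measurableSet_exists_tendsto fun n => measurable_birkhoffAverage hν.measurable hξ n
  have hGinv : θ ⁻¹' G = G := by
    ext x
    exact exists_tendsto_birkhoffAverage_apply_iff hC x
  have hμG : μ Gᶜ = 0 := herg.compl_eq_zero_of_measure hνμ hG hGinv <|
    measure_eq_zero_iff_ae_notMem.2 <|
      (ae_exists_tendsto_birkhoffAverage hν hξ hC).mono fun _ hx hx' => hx' hx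
  have hL := measurable_birkhoffLimsup hν.measurable hξ
  obtain ⟨c, hc⟩ := herg.exists_eq_const hμ hsub hc hL (birkhoffLimsup_apply hC)
    (abs_birkhoffLimsup_le hC)
  refine ⟨c, ?_⟩
  have : {x | ¬ Tendsto (birkhoffAverage ℝ θ ξ · x) atTop (𝓝 c)} =
      Gᶜ ∪ {x | birkhoffLimsup θ ξ x ≠ c} := by
    ext x
    simp only [mem_ofPred_eq, mem_union, mem_compl_iff, G]
    refine ⟨fun h => ?_, ?_⟩
    · by_contra! ⟨⟨c', hc'⟩, hLc⟩
      rw [← hLc, birkhoffLimsup, hc'.limsup_eq] at h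
      exact h hc'
    · rintro (h | h) hcx
      exacts [h ⟨c, hcx⟩, h hcx.limsup_eq]
  rw [this]
  exact hμ.union_eq_zero hsub hG.compl (hL (measurableSet_singleton c).compl) hμG hc

theorem ergodicCap_of_forall_exists_tendsto (hμ : IsCapacity μ) (hsub : IsSubadditiveCap μ)
    (h : ∀ ξ : Ω → ℝ, Measurable ξ → (∃ M : ℝ, ∀ ω, |ξ ω| ≤ M) →
      ∃ c, μ {x | ¬ Tendsto (birkhoffAverage ℝ θ ξ · x) atTop (𝓝 c)} = 0) :
    ErgodicCap μ θ := by
  intro B hB hinv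
  set ξ : Ω → ℝ := B.indicator 1
  have hξθ : ξ ∘ θ = ξ := by
    have hmem : ∀ x, θ x ∈ B ↔ x ∈ B := fun x => by rw [← mem_preimage, hinv]
    funext x
    by_cases hx : x ∈ B <;> simp [ξ, hx, hmem]
  have hconv : ∀ x, Tendsto (birkhoffAverage ℝ θ ξ · x) atTop (𝓝 (ξ x)) := fun x =>
    tendsto_const_nhds.congr' <| (eventually_ne_atTop 0).mono fun n hn => by
      simp [birkhoffAverage_of_comp_eq ℝ hξθ (Nat.cast_ne_zero.2 hn)]
  obtain ⟨c, hc⟩ := h ξ (measurable_one.indicator hB) ⟨1, fun x => by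
    by_cases hx : x ∈ B <;> simp [ξ, hx]⟩
  have hN : {x | ¬ Tendsto (birkhoffAverage ℝ θ ξ · x) atTop (𝓝 c)} =
      ξ ⁻¹' {c}ᶜ := by
    ext x
    exact ⟨fun h hx => h (hx ▸ hconv x), fun h h' => h (tendsto_nhds_unique (hconv x) h')⟩
  rw [hN] at hc
  have hNm : MeasurableSet (ξ ⁻¹' {c}ᶜ) :=
    measurable_one.indicator hB (measurableSet_singleton c).compl
  rcases eq_or_ne c 1 with rfl | hc1
  · have : μ Bᶜ = 0 :=
      hμ.eq_zero_of_subset hB.compl hNm (fun x (hx : x ∉ B) => by simp [ξ, hx]) hc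
    exact ⟨.inr (hμ.eq_one_of_compl_eq_zero hsub hB this), .inr this⟩
  · have : μ B = 0 := hμ.eq_zero_of_subset hB hNm (fun x hx => by simp [ξ, hx, hc1.symm]) hc
    exact ⟨.inl this, .inl this⟩

end ErgodicCapacity

theorem stmt16_general {Ω : Type*} [MeasurableSpace Ω]
    (𝒮 : Set (Set Ω → ℝ)) (h𝒮 : 𝒮.Nonempty) (hP : ∀ P ∈ 𝒮, IsFinAddProb P)
    (V : Set Ω → ℝ) (hV : UpperProbOf 𝒮 V)
    (hVb : ContBelow V) (hVa : ContAbove V)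
    (θ : Ω → Ω) (hθ : Measurable θ) (hpres : PreservesCap V θ) :
    ErgodicCap V θ ↔
      ∀ ξ : Ω → ℝ, Measurable ξ → (∃ M : ℝ, ∀ ω, |ξ ω| ≤ M) →
        ∃ c : ℝ,
          V {ω | ¬ Filter.Tendsto
            (fun n : ℕ => (1 / (n : ℝ)) * ∑ k ∈ Finset.range n, ξ (θ^[k] ω))
            Filter.atTop (nhds c)} = 0 := by
  have hcap := hV.isCapacity h𝒮 hP
  have hsub := hV.isSubadditiveCap h𝒮 hP
  have havg : ∀ (ξ : Ω → ℝ) (n : ℕ) (ω : Ω),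
      (1 / (n : ℝ)) * ∑ k ∈ Finset.range n, ξ (θ^[k] ω) = birkhoffAverage ℝ θ ξ n ω :=
    fun ξ n ω => by simp [birkhoffAverage, birkhoffSum]
  simp only [havg]
  refine ⟨fun herg ξ hξ ⟨M, hM⟩ => ?_, ergodicCap_of_forall_exists_tendsto hcap hsub⟩
  obtain ⟨ν, hν, hνθ, hνV⟩ := hV.exists_invariant_measure_le h𝒮 hP hVa hθ hpres
  exact herg.exists_tendsto_birkhoffAverage hcap hsub hVb hνθ hνV hξ hM

theorem stmt16 {Ω : Type*} [MeasurableSpace Ω]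
    (𝒮 : Set (Set Ω → ℝ)) (h𝒮 : 𝒮.Nonempty) (hP : ∀ P ∈ 𝒮, IsFinAddProb P)
    (V v : Set Ω → ℝ) (hV : UpperProbOf 𝒮 V) (hv : LowerProbOf 𝒮 v)
    (hVb : ContBelow V) (hVa : ContAbove V) (hvb : ContBelow v) (hva : ContAbove v)
    (θ : Ω → Ω) (hθ : Measurable θ) (hpres : PreservesCap V θ) :
    ErgodicCap V θ ↔
      ∀ ξ : Ω → ℝ, Measurable ξ → (∃ M : ℝ, ∀ ω, |ξ ω| ≤ M) →
        ∃ c : ℝ,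
          V {ω | ¬ Filter.Tendsto
            (fun n : ℕ => (1 / (n : ℝ)) * ∑ k ∈ Finset.range n, ξ (θ^[k] ω))
            Filter.atTop (nhds c)} = 0 :=
  stmt16_general 𝒮 h𝒮 hP V hV hVb hVa θ hθ hpres
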